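/- In a type-based two-strategy count game, for every Nash equilibrium profile a : Fin N → Bool there exists another Nash equilibrium profile ā : Fin N → Bool with the same number of players choosing each strategy (#{i : ā i = true} = #{i : a i = true}) and in which at most one type is mixed: there exists a type t* ∈ Fin T such that for every type t ≠ t* and all players i, j with τ(i) = τ(j) = t, one has ā(i) = ā(j). -/

import Mathlib

/-- Number of players choosing strategy `s` in profile `a`. -/
def muCount {N : ℕ} (a : Fin N → Bool) (s : Bool) : ℕ :=
  (Finset.univ.filter fun j => a j = s).card

/-- Nash equilibrium of a type-based two-strategy count game: `P t s m` is the payoff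
of a type-`t` player choosing strategy `s` when `m` players in total (including itself)
choose `s`; no player can strictly improve by unilaterally switching strategy. -/
def isNE {N T : ℕ} (τ : Fin N → Fin T) (P : Fin T → Bool → ℕ → ℝ)
    (a : Fin N → Bool) : Prop :=
  ∀ i : Fin N, P (τ i) (!(a i)) (muCount a (!(a i)) + 1) ≤ P (τ i) (a i) (muCount a (a i))

/-!
If a type is mixed in an equilibrium, both strategies are best responses for its players at
the current counts, so the strategies may be redistributed freely among the players of
mixed types without breaking the equilibrium, as long as the counts are kept. Among such
redistributions take one minimising the sum of the type indices of the `true` players. If two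
types `t₁ < t₂` were mixed in it, handing a `true` of a type-`t₂` player to a `false` player of
type `t₁` would lower that sum.
-/

open Finset Function

section Weight

variable {ι : Type*} [Fintype ι]

def trueWeight (w : ι → ℕ) (b : ι → Bool) : ℕ :=
  ∑ k, if b k then w k else 0

def moveTrue [DecidableEq ι] (b : ι → Bool) (i j : ι) : ι → Bool :=
  update (update b i false) j true

theorem trueWeight_moveTrue_add [DecidableEq ι] (w : ι → ℕ) {b : ι → Bool} {i j : ι}
    (hi : b i = true) (hj : b j = false) :
    trueWeight w (moveTrue b i j) + w i = trueWeight w b + w j := by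
  have hij : i ≠ j := fun h => by simp [h, hj] at hi
  have pointwise : ∀ k, ((if moveTrue b i j k then w k else 0) + if k = i then w i else 0) =
      (if b k then w k else 0) + if k = j then w j else 0 := by
    intro k
    by_cases hkj : k = j
    · subst hkj; simp [moveTrue, hj, Ne.symm hij]
    · by_cases hki : k = i
      · subst hki; simp [moveTrue, hi, hkj]
      · simp [moveTrue, hki, hkj]
  simpa [trueWeight, sum_add_distrib, sum_ite_eq'] using
    sum_congr (s₁ := univ) rfl fun k _ => pointwise k

end Weight

section Profiles

variable {N T : ℕ} (τ : Fin N → Fin T)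

theorem muCount_true_eq_trueWeight (b : Fin N → Bool) :
    muCount b true = trueWeight (fun _ => 1) b := by
  rw [muCount, card_filter, trueWeight]

theorem muCount_true_add_muCount_false (b : Fin N → Bool) :
    muCount b true + muCount b false = N := by
  simpa [muCount] using card_filter_add_card_filter_not (s := univ) (p := fun j => b j = true)

theorem muCount_eq_of_muCount_true_eq {a b : Fin N → Bool}
    (h : muCount b true = muCount a true) (s : Bool) : muCount b s = muCount a s := by
  have hb := muCount_true_add_muCount_false b
  have ha := muCount_true_add_muCount_false a
  cases s <;> omega

def TypewiseSupported (a b : Fin N → Bool) : Prop :=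
  ∀ i, ∃ j, τ j = τ i ∧ a j = b i

theorem TypewiseSupported.refl (a : Fin N → Bool) : TypewiseSupported τ a a :=
  fun i => ⟨i, rfl, rfl⟩

theorem TypewiseSupported.trans {a b c : Fin N → Bool} (hab : TypewiseSupported τ a b)
    (hbc : TypewiseSupported τ b c) : TypewiseSupported τ a c := by
  intro i
  obtain ⟨j, hj, hbj⟩ := hbc i
  obtain ⟨k, hk, hak⟩ := hab j
  exact ⟨k, hk.trans hj, hak.trans hbj⟩

theorem typewiseSupported_moveTrue {b : Fin N → Bool} {i i' j j' : Fin N}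
    (hi' : τ i' = τ i) (hbi' : b i' = false) (hj' : τ j' = τ j) (hbj' : b j' = true) :
    TypewiseSupported τ b (moveTrue b i j) := by
  intro k
  by_cases hkj : k = j
  · subst hkj; exact ⟨j', hj', by simp [moveTrue, hbj']⟩
  by_cases hki : k = i
  · subst hki; exact ⟨i', hi', by simp [moveTrue, hkj, hbi']⟩
  exact ⟨k, rfl, by simp [moveTrue, hki, hkj]⟩

theorem isNE.of_typewiseSupported {P : Fin T → Bool → ℕ → ℝ} {a b : Fin N → Bool}
    (ha : isNE τ P a) (hcount : muCount b true = muCount a true)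
    (hsupp : TypewiseSupported τ a b) : isNE τ P b := by
  intro i
  obtain ⟨j, hj, haj⟩ := hsupp i
  simpa only [muCount_eq_of_muCount_true_eq hcount, hj, haj] using ha j

def IsMinimalRedistribution (b : Fin N → Bool) : Prop :=
  ∀ c, muCount c true = muCount b true → TypewiseSupported τ b c →
    trueWeight (fun k => τ k) b ≤ trueWeight (fun k => τ k) c

theorem exists_isMinimalRedistribution (a : Fin N → Bool) :
    ∃ b, muCount b true = muCount a true ∧ TypewiseSupported τ a b ∧
      IsMinimalRedistribution τ b := by
  classical
  let candidates := univ.filter fun c => muCount c true = muCount a true ∧ TypewiseSupported τ a c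
  obtain ⟨b, hb, hb_le⟩ := candidates.exists_min_image (trueWeight fun k => τ k)
    ⟨a, mem_filter.2 ⟨mem_univ a, rfl, TypewiseSupported.refl τ a⟩⟩
  obtain ⟨-, hcount, hsupp⟩ := mem_filter.1 hb
  exact ⟨b, hcount, hsupp, fun c hc hbc =>
    hb_le c (mem_filter.2 ⟨mem_univ c, hc.trans hcount, hsupp.trans τ hbc⟩)⟩

def IsMixed (b : Fin N → Bool) (t : Fin T) : Prop :=
  ∃ i j, τ i = t ∧ τ j = t ∧ b i = true ∧ b j = false

theorem eq_of_not_isMixed {b : Fin N → Bool} {t : Fin T} (h : ¬ IsMixed τ b t) {i j : Fin N}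
    (hi : τ i = t) (hj : τ j = t) : b i = b j := by
  cases hbi : b i <;> cases hbj : b j
  all_goals first
    | rfl
    | exact (h ⟨i, j, hi, hj, hbi, hbj⟩).elim
    | exact (h ⟨j, i, hj, hi, hbj, hbi⟩).elim

theorem not_isMixed_of_lt {b : Fin N → Bool}
    (hmin : IsMinimalRedistribution τ b)
    {t₁ t₂ : Fin T} (hlt : t₁ < t₂) (h₁ : IsMixed τ b t₁) : ¬ IsMixed τ b t₂ := by
  rintro ⟨i, i', hi, hi', hbi, hbi'⟩
  obtain ⟨j', j, hj', hj, hbj', hbj⟩ := h₁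
  have hcount : muCount (moveTrue b i j) true = muCount b true := by
    simp only [muCount_true_eq_trueWeight]
    have := trueWeight_moveTrue_add (fun _ => 1) hbi hbj
    omega
  have hweight := trueWeight_moveTrue_add (fun k => τ k) hbi hbj
  have hle := hmin _ hcount
    (typewiseSupported_moveTrue τ (hi'.trans hi.symm) hbi' (hj'.trans hj.symm) hbj')
  simp only [hi, hj] at hweight
  have : (t₁ : ℕ) < t₂ := hlt
  omega

theorem exists_forall_ne_not_isMixed {b : Fin N → Bool} (hT : 0 < T)
    (hmin : IsMinimalRedistribution τ b) :
    ∃ tstar : Fin T, ∀ t, t ≠ tstar → ¬ IsMixed τ b t := by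
  by_cases hmixed : ∃ t, IsMixed τ b t
  · obtain ⟨tstar, hstar⟩ := hmixed
    refine ⟨tstar, fun t hne ht => ?_⟩
    rcases hne.lt_or_gt with hlt | hlt
    · exact not_isMixed_of_lt τ hmin hlt ht hstar
    · exact not_isMixed_of_lt τ hmin hlt hstar ht
  · exact ⟨⟨0, hT⟩, fun t _ ht => hmixed ⟨t, ht⟩⟩

end Profiles

/-- In a type-based two-strategy count game, for every Nash equilibrium
`a` there is another Nash equilibrium `ā` with the same number of players choosing each
strategy and in which at most one type is mixed: there is a type `t*` such that for any
type `t ≠ t*`, all players of type `t` use the same strategy in `ā`. -/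
theorem stmt6 (N T : ℕ) (hT : 0 < T) (τ : Fin N → Fin T) (P : Fin T → Bool → ℕ → ℝ)
    (a : Fin N → Bool) (ha : isNE τ P a) :
    ∃ abar : Fin N → Bool,
      isNE τ P abar ∧
      muCount abar true = muCount a true ∧
      ∃ tstar : Fin T, ∀ t : Fin T, t ≠ tstar →
        ∀ i j : Fin N, τ i = t → τ j = t → abar i = abar j := by
  obtain ⟨b, hcount, hsupp, hmin⟩ := exists_isMinimalRedistribution τ a
  obtain ⟨tstar, hstar⟩ := exists_forall_ne_not_isMixed τ hT hmin
  exact ⟨b, ha.of_typewiseSupported τ hcount hsupp, hcount, tstar,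
    fun t ht _ _ => eq_of_not_isMixed τ (hstar t ht)⟩
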